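/- arXiv:2205.04641 — 4 statements merged into one kernel-verified Lean document; each statement's English description precedes it below -/
import Mathlib

section
/- For any predictor distribution Q and true conditional distribution P over a finite label set, if a loss function ℓ satisfies |ℓ(b,y) − ℓ(b*,y)| ≤ M for all y and predictors b, b*, then the expected excess risk E_P[ℓ(b,Y) − ℓ(b*,Y)] is bounded above by M·√(2·KL(P‖Q)) when b minimizes the Q-expected loss and b* minimizes the P-expected loss. -/
/-!
Pinsker's inequality `∑ |p - q| ≤ √(2 KL(p‖q))` is derived from the pointwise bound
`(3/2) (t - 1)² ≤ (t + 2) (t log t - t + 1)`, summed at `t = p/q` and combined with the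
Cauchy–Schwarz inequality in Sedrakyan's form against the weights `p + 2q` of total mass 3.
The pointwise bound is an equality at `t = 1`, and the derivative of the difference of its
sides, `2 ((t + 1) log t - 2 (t - 1))`, has the sign of `t - 1` because it vanishes at `1`
and its own derivative `log t + 1/t - 1` is nonnegative.
Since `b` minimises the `Q`-risk, the excess `P`-risk of `b` over `b*` is at most the
difference of the two risks under `P - Q`, which is at most `M ∑ |p - q|`.
-/

open Finset Real InformationTheory

theorem apply_le_apply_of_hasDerivAt_of_sub_mul_nonneg {f f' : ℝ → ℝ} {c x : ℝ}
    (hf : ∀ y ∈ Set.uIcc c x, HasDerivAt f (f' y) y)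
    (hsign : ∀ y ∈ Set.uIcc c x, 0 ≤ (y - c) * f' y) : f c ≤ f x := by
  have hcont : ContinuousOn f (Set.uIcc c x) :=
    fun y hy ↦ (hf y hy).continuousAt.continuousWithinAt
  rcases le_total c x with hcx | hxc
  · rw [Set.uIcc_of_le hcx] at hf hsign hcont
    refine monotoneOn_of_hasDerivWithinAt_nonneg (f' := f') (convex_Icc c x) hcont
      (fun y hy ↦ ?_) (fun y hy ↦ ?_) ⟨le_rfl, hcx⟩ ⟨hcx, le_rfl⟩ hcx
    all_goals rw [interior_Icc] at hy
    · exact (hf y (Set.Ioo_subset_Icc_self hy)).hasDerivWithinAt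
    · exact nonneg_of_mul_nonneg_right (hsign y (Set.Ioo_subset_Icc_self hy)) (sub_pos.2 hy.1)
  · rw [Set.uIcc_of_ge hxc] at hf hsign hcont
    refine antitoneOn_of_hasDerivWithinAt_nonpos (f' := f') (convex_Icc x c) hcont
      (fun y hy ↦ ?_) (fun y hy ↦ ?_) ⟨le_rfl, hxc⟩ ⟨hxc, le_rfl⟩ hxc
    all_goals rw [interior_Icc] at hy
    · exact (hf y (Set.Ioo_subset_Icc_self hy)).hasDerivWithinAt
    · exact nonpos_of_mul_nonneg_right (hsign y (Set.Ioo_subset_Icc_self hy)) (sub_neg.2 hy.2)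

theorem sub_one_mul_add_one_mul_log_sub_nonneg {t : ℝ} (ht : 0 < t) :
    0 ≤ (t - 1) * ((t + 1) * log t - 2 * (t - 1)) := by
  set g : ℝ → ℝ := fun t ↦ (t + 1) * log t - 2 * (t - 1)
  have hg : ∀ s : ℝ, 0 < s → HasDerivAt g (log s + s⁻¹ - 1) s := fun s hs ↦ by
    refine ((((hasDerivAt_id' s).add_const 1).mul (hasDerivAt_log hs.ne')).sub
      (((hasDerivAt_id' s).sub_const 1).const_mul 2)).congr_deriv ?_
    field_simp
    ring
  have hmono : MonotoneOn g (Set.Ioi 0) := by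
    refine monotoneOn_of_hasDerivWithinAt_nonneg (f' := fun s ↦ log s + s⁻¹ - 1) (convex_Ioi 0)
      (fun s hs ↦ (hg s hs).continuousAt.continuousWithinAt) (fun s hs ↦ ?_) (fun s hs ↦ ?_)
    · rw [interior_Ioi] at hs ⊢
      exact (hg s hs).hasDerivWithinAt
    · rw [interior_Ioi] at hs
      linarith [one_sub_inv_le_log_of_pos hs]
  have hg1 : g 1 = 0 := by simp [g]
  rcases le_total 1 t with h | h
  · exact mul_nonneg (sub_nonneg.2 h) (hg1 ▸ hmono (Set.mem_Ioi.2 one_pos) ht h)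
  · exact mul_nonneg_of_nonpos_of_nonpos (sub_nonpos.2 h)
      (hg1 ▸ hmono ht (Set.mem_Ioi.2 one_pos) h)

theorem three_halves_mul_sub_one_sq_le_mul_klFun {t : ℝ} (ht : 0 ≤ t) :
    3 / 2 * (t - 1) ^ 2 ≤ (t + 2) * klFun t := by
  rcases ht.eq_or_lt with rfl | ht
  · norm_num [klFun_zero]
  set F : ℝ → ℝ := fun t ↦ (t + 2) * klFun t - 3 / 2 * (t - 1) ^ 2
  have hF : ∀ s ∈ Set.uIcc 1 t, HasDerivAt F (2 * ((s + 1) * log s - 2 * (s - 1))) s := by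
    intro s hs
    have hs_pos : 0 < s := lt_of_lt_of_le (lt_min one_pos ht) hs.1
    refine ((((hasDerivAt_id' s).add_const 2).mul (hasDerivAt_klFun hs_pos.ne')).sub
      ((((hasDerivAt_id' s).sub_const 1).pow 2).const_mul (3 / 2))).congr_deriv ?_
    norm_num [klFun_apply]
    ring
  have hmin := apply_le_apply_of_hasDerivAt_of_sub_mul_nonneg hF fun s hs ↦ by
    have hs_pos : 0 < s := lt_of_lt_of_le (lt_min one_pos ht) hs.1
    nlinarith [sub_one_mul_add_one_mul_log_sub_nonneg hs_pos]
  simp only [F, klFun_one] at hmin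
  linarith

theorem sq_sub_div_add_two_mul_le_mul_klFun {p q : ℝ} (hp : 0 ≤ p) (hq : 0 < q) :
    (p - q) ^ 2 / (p + 2 * q) ≤ 2 / 3 * (q * klFun (p / q)) := by
  have key := three_halves_mul_sub_one_sq_le_mul_klFun (div_nonneg hp hq.le)
  rw [div_le_iff₀ (by linarith)]
  obtain ⟨t, rfl⟩ : ∃ t, p = t * q := ⟨p / q, (div_mul_cancel₀ p hq.ne').symm⟩
  rw [mul_div_cancel_right₀ t hq.ne'] at key ⊢
  linear_combination (2 / 3 * q ^ 2) * key

theorem sum_mul_klFun_div_eq {Y : Type*} [Fintype Y] (P Q : Y → ℝ) (hQ : ∀ y, 0 < Q y)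
    (hsum : ∑ y, P y = ∑ y, Q y) :
    ∑ y, Q y * klFun (P y / Q y) = ∑ y, P y * log (P y / Q y) := by
  have hterm : ∀ y, Q y * klFun (P y / Q y) = P y * log (P y / Q y) + (Q y - P y) := fun y ↦ by
    rw [klFun_apply]
    field_simp [(hQ y).ne']
    ring
  simp only [hterm, sum_add_distrib, sum_sub_distrib, hsum, sub_self, add_zero]

theorem sum_abs_sub_le_sqrt_two_mul_sum_mul_log_div {Y : Type*} [Fintype Y] (P Q : Y → ℝ)
    (hP : ∀ y, 0 ≤ P y) (hQ : ∀ y, 0 < Q y) (hPsum : ∑ y, P y = 1) (hQsum : ∑ y, Q y = 1) :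
    ∑ y, |P y - Q y| ≤ √(2 * ∑ y, P y * log (P y / Q y)) := by
  have hweight : ∀ y ∈ univ, 0 < P y + 2 * Q y := fun y _ ↦ by linarith [hP y, hQ y]
  have hmass : ∑ y, (P y + 2 * Q y) = 3 := by
    rw [sum_add_distrib, ← mul_sum, hPsum, hQsum]
    norm_num
  have hsedrakyan := sq_sum_div_le_sum_sq_div univ (fun y ↦ |P y - Q y|) hweight
  simp only [hmass, sq_abs] at hsedrakyan
  have hpointwise : ∑ y, (P y - Q y) ^ 2 / (P y + 2 * Q y) ≤
      2 / 3 * ∑ y, P y * log (P y / Q y) := by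
    rw [← sum_mul_klFun_div_eq P Q hQ (hPsum.trans hQsum.symm), mul_sum]
    exact sum_le_sum fun y _ ↦ sq_sub_div_add_two_mul_le_mul_klFun (hP y) (hQ y)
  exact le_sqrt_of_sq_le (by linarith)

theorem sum_mul_le_mul_sum_abs_of_abs_le {ι : Type*} (s : Finset ι) {a f : ι → ℝ} {M : ℝ}
    (hf : ∀ i ∈ s, |f i| ≤ M) : ∑ i ∈ s, a i * f i ≤ M * ∑ i ∈ s, |a i| := by
  rw [mul_sum]
  refine sum_le_sum fun i hi ↦ (le_abs_self _).trans ?_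
  rw [abs_mul, mul_comm M]
  exact mul_le_mul_of_nonneg_left (hf i hi) (abs_nonneg _)

theorem excess_risk_bounded_loss_general {Y B : Type*} [Fintype Y]
    (P Q : Y → ℝ) (hP : ∀ y, 0 ≤ P y) (hQ : ∀ y, 0 < Q y)
    (hPsum : ∑ y, P y = 1) (hQsum : ∑ y, Q y = 1)
    (ℓ : B → Y → ℝ) (M : ℝ) (hM : 0 < M)
    (hbound : ∀ (b b' : B) (y : Y), |ℓ b y - ℓ b' y| ≤ M)
    (b bstar : B)
    (hb : ∀ b' : B, ∑ y, Q y * ℓ b y ≤ ∑ y, Q y * ℓ b' y) :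
    ∑ y, P y * (ℓ b y - ℓ bstar y) ≤
      M * Real.sqrt (2 * ∑ y, P y * Real.log (P y / Q y)) := by
  have hQ_excess : ∑ y, Q y * (ℓ b y - ℓ bstar y) ≤ 0 := by
    simp only [mul_sub, sum_sub_distrib]
    linarith [hb bstar]
  calc ∑ y, P y * (ℓ b y - ℓ bstar y)
      = ∑ y, Q y * (ℓ b y - ℓ bstar y) + ∑ y, (P y - Q y) * (ℓ b y - ℓ bstar y) := by
        rw [← sum_add_distrib]
        exact sum_congr rfl fun y _ ↦ by ring
    _ ≤ 0 + M * ∑ y, |P y - Q y| :=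
        add_le_add hQ_excess (sum_mul_le_mul_sum_abs_of_abs_le _ fun y _ ↦ hbound b bstar y)
    _ ≤ M * √(2 * ∑ y, P y * log (P y / Q y)) := by
        rw [zero_add]
        exact mul_le_mul_of_nonneg_left
          (sum_abs_sub_le_sqrt_two_mul_sum_mul_log_div P Q hP hQ hPsum hQsum) hM.le

/-- Bounded-loss excess risk bound via Pinsker's inequality (Theorem 3 key step). -/
theorem excess_risk_bounded_loss {Y B : Type*} [Fintype Y] [Nonempty Y]
    (P Q : Y → ℝ) (hP : ∀ y, 0 ≤ P y) (hQ : ∀ y, 0 < Q y)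
    (hPsum : ∑ y, P y = 1) (hQsum : ∑ y, Q y = 1)
    (ℓ : B → Y → ℝ) (M : ℝ) (hM : 0 < M)
    (hbound : ∀ (b b' : B) (y : Y), |ℓ b y - ℓ b' y| ≤ M)
    (b bstar : B)
    (hb : ∀ b' : B, ∑ y, Q y * ℓ b y ≤ ∑ y, Q y * ℓ b' y)
    (hbstar : ∀ b' : B, ∑ y, P y * ℓ bstar y ≤ ∑ y, P y * ℓ b' y) :
    ∑ y, P y * (ℓ b y - ℓ bstar y) ≤
      M * Real.sqrt (2 * ∑ y, P y * Real.log (P y / Q y)) :=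
  excess_risk_bounded_loss_general P Q hP hQ hPsum hQsum ℓ M hM hbound b bstar hb
end

section
/- Minimax equals maximin for log-loss expected regret: min over predictors Q of max over parameters (θ_s, θ_t) of the expected KL-regret equals max over priors ω(θ_s, θ_t) of the conditional mutual information I(Y'_t; Θ_s, Θ_t | D^m_s, D^{U,n}_t, X'_t), where the joint law is induced by the prior and the parametric model. -/
open Finset Real

variable {Θs Θt S U X Y : Type*}
  [Fintype Θs] [Fintype Θt] [Fintype S] [Fintype U] [Fintype X] [Fintype Y]
  [Nonempty Θs] [Nonempty Θt] [Nonempty S] [Nonempty U] [Nonempty X] [Nonempty Y]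

/-- The set of (strictly positive) conditional predictors. -/
def Predictors (S U X Y : Type*) [Fintype Y] : Type _ :=
  {Q : S → U → X → Y → ℝ // ∀ s u x, (∀ y, 0 < Q s u x y) ∧ ∑ y, Q s u x y = 1}

/-- The set of priors over the parameter pair. -/
def Priors (Θs Θt : Type*) [Fintype Θs] [Fintype Θt] : Type _ :=
  {ω : Θs → Θt → ℝ // (∀ θs θt, 0 ≤ ω θs θt) ∧ ∑ θs, ∑ θt, ω θs θt = 1}

/-- Expected KL regret of predictor Q under parameters (θs, θt): the model draws
source data s ~ Ps θs, unlabeled target data u ~ Pt θt, test feature x ~ Px θt,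
and the true label distribution is Pyx θt x. -/
noncomputable def regret [Fintype S] [Fintype U] [Fintype X] [Fintype Y]
    (Ps : Θs → S → ℝ) (Pt : Θt → U → ℝ) (Px : Θt → X → ℝ)
    (Pyx : Θt → X → Y → ℝ) (Q : S → U → X → Y → ℝ) (θs : Θs) (θt : Θt) : ℝ :=
  ∑ s, ∑ u, ∑ x, Ps θs s * Pt θt u * Px θt x *
    ∑ y, Pyx θt x y * Real.log (Pyx θt x y / Q s u x y)

/-- The Bayes mixture predictor associated with a prior. -/
noncomputable def mixturePredictor [Fintype Θs] [Fintype Θt]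
    (Ps : Θs → S → ℝ) (Pt : Θt → U → ℝ) (Px : Θt → X → ℝ)
    (Pyx : Θt → X → Y → ℝ) (ω : Θs → Θt → ℝ) (s : S) (u : U) (x : X) (y : Y) : ℝ :=
  (∑ θs, ∑ θt, ω θs θt * Ps θs s * Pt θt u * Px θt x * Pyx θt x y) /
    (∑ θs, ∑ θt, ω θs θt * Ps θs s * Pt θt u * Px θt x)

/-- Conditional mutual information I(Y'; Θs, Θt | D_s, D_t, X') under the joint
law induced by the prior ω and the model: it equals the prior-averaged regret of
the Bayes mixture predictor. -/
noncomputable def condMutualInfo [Fintype Θs] [Fintype Θt] [Fintype S] [Fintype U]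
    [Fintype X] [Fintype Y]
    (Ps : Θs → S → ℝ) (Pt : Θt → U → ℝ) (Px : Θt → X → ℝ)
    (Pyx : Θt → X → Y → ℝ) (ω : Θs → Θt → ℝ) : ℝ :=
  ∑ θs, ∑ θt, ω θs θt *
    regret Ps Pt Px Pyx (mixturePredictor Ps Pt Px Pyx ω) θs θt

/-! This is the classical saddle-point proof of the redundancy–capacity theorem. Read the model
as one channel from the parameter `θ = (θs, θt)` and the context `c = (s, u, x)` to the label.
For every prior `ω` the Bayes mixture is the optimal predictor on average, so the conditional
mutual information is at most the `ω`-average of the regret of any predictor, hence at most its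
worst-case regret. Conversely, the conditional mutual information is continuous on the compact
simplex of priors, so some prior `ω` maximises it. Moving `ω` by `t` towards the point mass at
`θ` cannot increase it, and by the optimality of the Bayes mixture this forces the regret of
the perturbed mixture at `θ` to be at most the maximum; as `t → 0` the same holds for the
mixture of `ω`, which together with `ω` forms a saddle point.
-/

lemma sub_le_mul_log_div {p q : ℝ} (hp : 0 ≤ p) (hq : 0 < q) : p - q ≤ p * log (p / q) := by
  rcases hp.eq_or_lt with rfl | hp
  · simpa using hq.le
  calc p - q = p * (1 - (p / q)⁻¹) := by field_simp
    _ ≤ p * log (p / q) := by gcongr; exact one_sub_inv_le_log_of_pos (by positivity)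

section FiniteDistributions

variable {ι : Type*} [Fintype ι]

variable (ι) in
def posSimplex : Set (ι → ℝ) :=
  {p | (∀ i, 0 < p i) ∧ ∑ i, p i = 1}

noncomputable def relEntropy (p q : ι → ℝ) : ℝ :=
  ∑ i, p i * log (p i / q i)

lemma posSimplex_subset_stdSimplex : posSimplex ι ⊆ stdSimplex ℝ ι :=
  fun _ hp => ⟨fun i => (hp.1 i).le, hp.2⟩

lemma relEntropy_nonneg {p q : ι → ℝ} (hp : p ∈ stdSimplex ℝ ι) (hq : q ∈ posSimplex ι) :
    0 ≤ relEntropy p q :=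
  calc (0 : ℝ) = ∑ i, (p i - q i) := by rw [Finset.sum_sub_distrib, hp.2, hq.2, sub_self]
    _ ≤ relEntropy p q := Finset.sum_le_sum fun i _ => sub_le_mul_log_div (hp.1 i) (hq.1 i)

lemma relEntropy_sub_relEntropy {p q r : ι → ℝ} (hp : ∀ i, 0 < p i) (hq : ∀ i, 0 < q i)
    (hr : ∀ i, 0 < r i) : relEntropy p q - relEntropy p r = ∑ i, p i * log (r i / q i) := by
  simp only [relEntropy, ← Finset.sum_sub_distrib, ← mul_sub]
  refine Finset.sum_congr rfl fun i _ => congrArg _ ?_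
  rw [log_div (hp i).ne' (hq i).ne', log_div (hp i).ne' (hr i).ne', log_div (hr i).ne' (hq i).ne']
  ring

lemma sum_mul_pos_of_mem_stdSimplex {ω f : ι → ℝ} (hω : ω ∈ stdSimplex ℝ ι)
    (hf : ∀ i, 0 < f i) : 0 < ∑ i, ω i * f i := by
  obtain ⟨i, hi⟩ : ∃ i, 0 < ω i := by
    by_contra! h
    have : ∑ i, ω i = 0 := Finset.sum_eq_zero fun i _ => (h i).antisymm (hω.1 i)
    simp [hω.2] at this
  exact Finset.sum_pos' (fun j _ => mul_nonneg (hω.1 j) (hf j).le)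
    ⟨i, Finset.mem_univ _, mul_pos hi (hf i)⟩

lemma sum_mul_le_of_mem_stdSimplex {ω f : ι → ℝ} {b : ℝ} (hω : ω ∈ stdSimplex ℝ ι)
    (hf : ∀ i, f i ≤ b) : ∑ i, ω i * f i ≤ b :=
  calc ∑ i, ω i * f i ≤ ∑ i, ω i * b :=
      Finset.sum_le_sum fun i _ => mul_le_mul_of_nonneg_left (hf i) (hω.1 i)
    _ = b := by rw [← Finset.sum_mul, hω.2, one_mul]

end FiniteDistributions

noncomputable def kernelRegret {Θ C Y : Type*} [Fintype C] [Fintype Y] (P : Θ → C → ℝ)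
    (W : Θ → C → Y → ℝ) (Q : C → Y → ℝ) (θ : Θ) : ℝ :=
  ∑ c, P θ c * relEntropy (W θ c) (Q c)

noncomputable def bayesMixture {Θ C Y : Type*} [Fintype Θ] (P : Θ → C → ℝ) (W : Θ → C → Y → ℝ)
    (ω : Θ → ℝ) (c : C) (y : Y) : ℝ :=
  (∑ θ, ω θ * (P θ c * W θ c y)) / ∑ θ, ω θ * P θ c

section Kernel

variable {Θ C Y : Type*} [Fintype Θ] [Fintype Y] {P : Θ → C → ℝ} {W : Θ → C → Y → ℝ}

lemma bayesMixture_mem_posSimplex (hP : ∀ θ c, 0 < P θ c) (hW : ∀ θ c, W θ c ∈ posSimplex Y)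
    {ω : Θ → ℝ} (hω : ω ∈ stdSimplex ℝ Θ) (c : C) : bayesMixture P W ω c ∈ posSimplex Y := by
  have hD := sum_mul_pos_of_mem_stdSimplex hω (hP · c)
  refine ⟨fun y => div_pos ?_ hD, ?_⟩
  · exact sum_mul_pos_of_mem_stdSimplex hω fun θ => mul_pos (hP θ c) ((hW θ c).1 y)
  · simp only [bayesMixture, ← Finset.sum_div]
    rw [Finset.sum_comm, div_eq_one_iff_eq hD.ne']
    simp_rw [← Finset.mul_sum, (hW _ c).2, mul_one]

variable [Fintype C]

variable (P W) in
noncomputable def bayesRisk (ω : Θ → ℝ) : ℝ :=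
  ∑ θ, ω θ * kernelRegret P W (bayesMixture P W ω) θ

/-- The "golden formula" of universal coding. -/
theorem sum_mul_kernelRegret_sub_bayesRisk (hP : ∀ θ c, 0 < P θ c)
    (hW : ∀ θ c, W θ c ∈ posSimplex Y) {ω : Θ → ℝ} (hω : ω ∈ stdSimplex ℝ Θ) {Q : C → Y → ℝ}
    (hQ : ∀ c, Q c ∈ posSimplex Y) :
    ∑ θ, ω θ * kernelRegret P W Q θ - bayesRisk P W ω =
      ∑ c, (∑ θ, ω θ * P θ c) * relEntropy (bayesMixture P W ω c) (Q c) := by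
  have hM := bayesMixture_mem_posSimplex hP hW hω
  have hdiff : ∀ θ c, relEntropy (W θ c) (Q c) - relEntropy (W θ c) (bayesMixture P W ω c) =
      ∑ y, W θ c y * log (bayesMixture P W ω c y / Q c y) := fun θ c =>
    relEntropy_sub_relEntropy (hW θ c).1 (hQ c).1 (hM c).1
  have hmul : ∀ c y, (∑ θ, ω θ * P θ c) * bayesMixture P W ω c y =
      ∑ θ, ω θ * (P θ c * W θ c y) := fun c y =>
    mul_div_cancel₀ _ (sum_mul_pos_of_mem_stdSimplex hω (hP · c)).ne'
  calc ∑ θ, ω θ * kernelRegret P W Q θ - bayesRisk P W ω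
      = ∑ θ, ∑ c, ∑ y, ω θ * (P θ c * W θ c y) * log (bayesMixture P W ω c y / Q c y) := by
        simp only [bayesRisk, kernelRegret, ← Finset.sum_sub_distrib, ← mul_sub, hdiff,
          Finset.mul_sum, mul_assoc]
    _ = ∑ c, ∑ y, (∑ θ, ω θ * (P θ c * W θ c y)) * log (bayesMixture P W ω c y / Q c y) := by
        rw [Finset.sum_comm]
        simp_rw [Finset.sum_mul]
        exact Finset.sum_congr rfl fun c _ => Finset.sum_comm
    _ = _ := by
        simp only [relEntropy, Finset.mul_sum, ← hmul, mul_assoc]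

theorem bayesRisk_le_sum_mul_kernelRegret (hP : ∀ θ c, 0 < P θ c)
    (hW : ∀ θ c, W θ c ∈ posSimplex Y) {ω : Θ → ℝ} (hω : ω ∈ stdSimplex ℝ Θ) {Q : C → Y → ℝ}
    (hQ : ∀ c, Q c ∈ posSimplex Y) :
    bayesRisk P W ω ≤ ∑ θ, ω θ * kernelRegret P W Q θ := by
  have hgolden := sum_mul_kernelRegret_sub_bayesRisk hP hW hω hQ
  have hdiv : 0 ≤ ∑ c, (∑ θ, ω θ * P θ c) * relEntropy (bayesMixture P W ω c) (Q c) :=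
    Finset.sum_nonneg fun c _ => mul_nonneg (sum_mul_pos_of_mem_stdSimplex hω (hP · c)).le
      (relEntropy_nonneg (posSimplex_subset_stdSimplex (bayesMixture_mem_posSimplex hP hW hω c))
        (hQ c))
  linarith

theorem bayesRisk_le_iSup_kernelRegret (hP : ∀ θ c, 0 < P θ c)
    (hW : ∀ θ c, W θ c ∈ posSimplex Y) {ω : Θ → ℝ} (hω : ω ∈ stdSimplex ℝ Θ) {Q : C → Y → ℝ}
    (hQ : ∀ c, Q c ∈ posSimplex Y) : bayesRisk P W ω ≤ ⨆ θ, kernelRegret P W Q θ :=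
  (bayesRisk_le_sum_mul_kernelRegret hP hW hω hQ).trans <|
    sum_mul_le_of_mem_stdSimplex hω fun θ => le_ciSup (Finite.bddAbove_range _) θ

lemma continuousOn_kernelRegret_bayesMixture (hP : ∀ θ c, 0 < P θ c)
    (hW : ∀ θ c, W θ c ∈ posSimplex Y) (θ : Θ) :
    ContinuousOn (fun ω => kernelRegret P W (bayesMixture P W ω) θ) (stdSimplex ℝ Θ) := by
  have hM := fun ω (hω : ω ∈ stdSimplex ℝ Θ) => bayesMixture_mem_posSimplex hP hW hω
  refine continuousOn_finsetSum _ fun c _ => continuousOn_const.mul <|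
    continuousOn_finsetSum _ fun y _ => continuousOn_const.mul <| ContinuousOn.log ?_
      fun ω hω => (div_pos ((hW θ c).1 y) ((hM ω hω c).1 y)).ne'
  refine continuousOn_const.div ?_ fun ω hω => ((hM ω hω c).1 y).ne'
  exact ContinuousOn.div (by fun_prop) (by fun_prop)
    fun ω hω => (sum_mul_pos_of_mem_stdSimplex hω (hP · c)).ne'

lemma continuousOn_bayesRisk (hP : ∀ θ c, 0 < P θ c) (hW : ∀ θ c, W θ c ∈ posSimplex Y) :
    ContinuousOn (bayesRisk P W) (stdSimplex ℝ Θ) :=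
  continuousOn_finsetSum _ fun θ _ =>
    (continuous_apply θ).continuousOn.mul (continuousOn_kernelRegret_bayesMixture hP hW θ)

lemma bayesRisk_lineMap_ge (hP : ∀ θ c, 0 < P θ c) (hW : ∀ θ c, W θ c ∈ posSimplex Y)
    {ω ν : Θ → ℝ} (hω : ω ∈ stdSimplex ℝ Θ) (hν : ν ∈ stdSimplex ℝ Θ) {t : ℝ}
    (ht : t ∈ Set.Icc 0 1) :
    (1 - t) * bayesRisk P W ω +
        t * ∑ θ, ν θ * kernelRegret P W (bayesMixture P W (AffineMap.lineMap ω ν t)) θ ≤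
      bayesRisk P W (AffineMap.lineMap ω ν t) := by
  set ωt := AffineMap.lineMap ω ν t
  set R := kernelRegret P W (bayesMixture P W ωt)
  have hωt : ωt ∈ stdSimplex ℝ Θ := (convex_stdSimplex ℝ Θ).lineMap_mem hω hν ht
  have hsplit : bayesRisk P W ωt = (1 - t) * ∑ θ, ω θ * R θ + t * ∑ θ, ν θ * R θ := by
    simp only [bayesRisk, R, ωt, AffineMap.lineMap_apply_module, Pi.add_apply, Pi.smul_apply,
      smul_eq_mul, add_mul, mul_assoc, Finset.sum_add_distrib, ← Finset.mul_sum]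
  have hduality :=
    bayesRisk_le_sum_mul_kernelRegret hP hW hω (bayesMixture_mem_posSimplex hP hW hωt)
  have := mul_le_mul_of_nonneg_left hduality (sub_nonneg.2 ht.2)
  linarith

lemma kernelRegret_bayesMixture_le_of_isMaxOn (hP : ∀ θ c, 0 < P θ c)
    (hW : ∀ θ c, W θ c ∈ posSimplex Y) {ω : Θ → ℝ} (hω : ω ∈ stdSimplex ℝ Θ)
    (hmax : IsMaxOn (bayesRisk P W) (stdSimplex ℝ Θ) ω) (θ : Θ) :
    kernelRegret P W (bayesMixture P W ω) θ ≤ bayesRisk P W ω := by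
  classical
  have hδ : Pi.single θ 1 ∈ stdSimplex ℝ Θ := single_mem_stdSimplex ℝ θ
  have hseg : ∀ t ∈ Set.Icc (0 : ℝ) 1, AffineMap.lineMap ω (Pi.single θ 1) t ∈ stdSimplex ℝ Θ :=
    fun t ht => (convex_stdSimplex ℝ Θ).lineMap_mem hω hδ ht
  set f := fun t : ℝ =>
    kernelRegret P W (bayesMixture P W (AffineMap.lineMap ω (Pi.single θ 1) t)) θ
  have hf : ContinuousOn f (Set.Icc 0 1) :=
    (continuousOn_kernelRegret_bayesMixture hP hW θ).comp
      AffineMap.lineMap_continuous.continuousOn hseg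
  have hle : ∀ t ∈ Set.Ioc (0 : ℝ) 1, f t ≤ bayesRisk P W ω := fun t ht => by
    have hperturb := bayesRisk_lineMap_ge hP hW hω hδ (Set.Ioc_subset_Icc_self ht)
    have hmax_t : bayesRisk P W (AffineMap.lineMap ω (Pi.single θ 1) t) ≤ bayesRisk P W ω :=
      hmax (hseg t (Set.Ioc_subset_Icc_self ht))
    simp only [Pi.single_apply, ite_mul, one_mul, zero_mul, Finset.sum_ite_eq',
      Finset.mem_univ, if_true] at hperturb
    exact le_of_mul_le_mul_left (by linarith) ht.1
  simpa [f] using ContinuousWithinAt.closure_le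
    (by rw [closure_Ioc zero_ne_one]; exact ⟨le_rfl, zero_le_one⟩)
    ((hf 0 ⟨le_rfl, zero_le_one⟩).mono Set.Ioc_subset_Icc_self) continuousWithinAt_const hle

theorem exists_forall_kernelRegret_bayesMixture_le [Nonempty Θ] (hP : ∀ θ c, 0 < P θ c)
    (hW : ∀ θ c, W θ c ∈ posSimplex Y) :
    ∃ ω ∈ stdSimplex ℝ Θ, ∀ θ, kernelRegret P W (bayesMixture P W ω) θ ≤ bayesRisk P W ω := by
  classical
  obtain ⟨ω, hω, hmax⟩ := (isCompact_stdSimplex ℝ Θ).exists_isMaxOn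
    ⟨_, single_mem_stdSimplex ℝ (Classical.arbitrary Θ)⟩ (continuousOn_bayesRisk hP hW)
  exact ⟨ω, hω, kernelRegret_bayesMixture_le_of_isMaxOn hP hW hω hmax⟩

end Kernel

lemma ciInf_eq_ciSup_of_saddle {ι κ α : Type*} [ConditionallyCompleteLinearOrder α]
    {f : ι → α} {g : κ → α} (hle : ∀ i k, g k ≤ f i) (i₀ : ι) (k₀ : κ) (h₀ : f i₀ ≤ g k₀) :
    ⨅ i, f i = ⨆ k, g k := by
  have : Nonempty ι := ⟨i₀⟩
  have : Nonempty κ := ⟨k₀⟩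
  have hf : ⨅ i, f i = f i₀ :=
    le_antisymm (ciInf_le ⟨g k₀, Set.forall_mem_range.2 (hle · k₀)⟩ i₀)
      (le_ciInf fun i => h₀.trans (hle i k₀))
  have hg : ⨆ k, g k = g k₀ :=
    le_antisymm (ciSup_le fun k => (hle i₀ k).trans h₀)
      (le_ciSup ⟨f i₀, Set.forall_mem_range.2 (hle i₀ ·)⟩ k₀)
  rw [hf, hg]
  exact le_antisymm h₀ (hle i₀ k₀)

section Model

variable {Θs Θt S U X Y : Type*}
  (Ps : Θs → S → ℝ) (Pt : Θt → U → ℝ) (Px : Θt → X → ℝ) (Pyx : Θt → X → Y → ℝ)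

def contextLaw (θ : Θs × Θt) (c : S × U × X) : ℝ :=
  Ps θ.1 c.1 * Pt θ.2 c.2.1 * Px θ.2 c.2.2

def labelKernel (θ : Θs × Θt) (c : S × U × X) : Y → ℝ :=
  Pyx θ.2 c.2.2

lemma Priors.uncurry_mem_stdSimplex [Fintype Θs] [Fintype Θt] (ω : Priors Θs Θt) :
    Function.uncurry ω.1 ∈ stdSimplex ℝ (Θs × Θt) :=
  ⟨fun θ => ω.2.1 θ.1 θ.2, by rw [Fintype.sum_prod_type]; exact ω.2.2⟩

def Priors.ofStdSimplex [Fintype Θs] [Fintype Θt] {ω : Θs × Θt → ℝ}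
    (hω : ω ∈ stdSimplex ℝ (Θs × Θt)) : Priors Θs Θt :=
  ⟨Function.curry ω, fun a b => hω.1 (a, b), by rw [← Fintype.sum_prod_type']; exact hω.2⟩

lemma mixturePredictor_eq_bayesMixture [Fintype Θs] [Fintype Θt] (ω : Θs → Θt → ℝ) :
    (fun c : S × U × X => mixturePredictor Ps Pt Px Pyx ω c.1 c.2.1 c.2.2) =
      bayesMixture (contextLaw Ps Pt Px) (labelKernel Pyx) (Function.uncurry ω) := by
  ext c y
  simp only [mixturePredictor, bayesMixture, contextLaw, labelKernel, Fintype.sum_prod_type,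
    Function.uncurry_apply_pair, mul_assoc]

lemma regret_eq_kernelRegret [Fintype S] [Fintype U] [Fintype X] [Fintype Y]
    (Q : S → U → X → Y → ℝ) (a : Θs) (b : Θt) :
    regret Ps Pt Px Pyx Q a b =
      kernelRegret (contextLaw Ps Pt Px) (labelKernel Pyx) (fun c => Q c.1 c.2.1 c.2.2)
        (a, b) := by
  simp only [regret, kernelRegret, relEntropy, contextLaw, labelKernel, Fintype.sum_prod_type]

lemma condMutualInfo_eq_bayesRisk [Fintype Θs] [Fintype Θt] [Fintype S] [Fintype U]
    [Fintype X] [Fintype Y] (ω : Θs → Θt → ℝ) :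
    condMutualInfo Ps Pt Px Pyx ω =
      bayesRisk (contextLaw Ps Pt Px) (labelKernel Pyx) (Function.uncurry ω) := by
  simp only [condMutualInfo, bayesRisk, Fintype.sum_prod_type, Function.uncurry_apply_pair,
    regret_eq_kernelRegret, mixturePredictor_eq_bayesMixture]

end Model

/-- Minimax redundancy–capacity theorem (Lemma: worst-case excess risk under
log-loss). -/
theorem minimax_regret_eq_max_cmi
    (Ps : Θs → S → ℝ) (Pt : Θt → U → ℝ) (Px : Θt → X → ℝ) (Pyx : Θt → X → Y → ℝ)
    (hPs : ∀ θs, (∀ s, 0 < Ps θs s) ∧ ∑ s, Ps θs s = 1)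
    (hPt : ∀ θt, (∀ u, 0 < Pt θt u) ∧ ∑ u, Pt θt u = 1)
    (hPx : ∀ θt, (∀ x, 0 < Px θt x) ∧ ∑ x, Px θt x = 1)
    (hPyx : ∀ θt x, (∀ y, 0 < Pyx θt x y) ∧ ∑ y, Pyx θt x y = 1) :
    (⨅ Q : Predictors S U X Y, ⨆ θ : Θs × Θt,
        regret Ps Pt Px Pyx Q.1 θ.1 θ.2) =
      ⨆ ω : Priors Θs Θt, condMutualInfo Ps Pt Px Pyx ω.1 := by
  have hP : ∀ θ c, 0 < contextLaw Ps Pt Px θ c := fun θ c =>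
    mul_pos (mul_pos ((hPs θ.1).1 c.1) ((hPt θ.2).1 c.2.1)) ((hPx θ.2).1 c.2.2)
  have hW : ∀ (θ : Θs × Θt) (c : S × U × X), labelKernel Pyx θ c ∈ posSimplex Y :=
    fun θ c => hPyx θ.2 c.2.2
  obtain ⟨ω, hω, hsaddle⟩ := exists_forall_kernelRegret_bayesMixture_le hP hW
  have hmix := mixturePredictor_eq_bayesMixture Ps Pt Px Pyx (Function.curry ω)
  rw [Function.uncurry_curry] at hmix
  let Q₀ : Predictors S U X Y := ⟨mixturePredictor Ps Pt Px Pyx (Function.curry ω),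
    fun s u x => congrFun hmix (s, u, x) ▸ bayesMixture_mem_posSimplex hP hW hω (s, u, x)⟩
  refine ciInf_eq_ciSup_of_saddle (fun Q ν => ?_) Q₀ (Priors.ofStdSimplex hω) ?_
  · simp only [condMutualInfo_eq_bayesRisk, regret_eq_kernelRegret]
    exact bayesRisk_le_iSup_kernelRegret hP hW ν.uncurry_mem_stdSimplex
      fun c => Q.2 c.1 c.2.1 c.2.2
  · simp only [Q₀, Priors.ofStdSimplex, condMutualInfo_eq_bayesRisk, regret_eq_kernelRegret,
      hmix, Function.uncurry_curry]
    exact ciSup_le hsaddle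
end

section
/- If ℓ is β-exponentially concave in b (i.e., b ↦ exp(−β ℓ(b,y)) is concave for each y), and b minimizes the Q-expected loss while b* is the Bayes act under P, then the excess risk E_P[ℓ(b,Y) − ℓ(b*,Y)] ≤ (1/β)·KL(P‖Q). -/
open Finset Real

lemma log_one_add_ge (u : ℝ) (hu : -(1/2) ≤ u) : u - 2*u^2 ≤ Real.log (1+u) := by
  have h1 : (0:ℝ) < 1 + u := by linarith
  have h2 : Real.log (1+u)⁻¹ ≤ (1+u)⁻¹ - 1 := Real.log_le_sub_one_of_pos (by positivity)
  rw [Real.log_inv] at h2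
  have h3 : (1+u) * (1+u)⁻¹ = 1 := mul_inv_cancel₀ (ne_of_gt h1)
  nlinarith [sq_nonneg u, mul_pos h1 h1]

/-- Excess risk bound for β-exponentially concave losses (Theorem 2 key step). -/
theorem excess_risk_exp_concave_loss {Y : Type*} [Fintype Y] [Nonempty Y]
    {E : Type*} [NormedAddCommGroup E] [NormedSpace ℝ E]
    (B : Set E) (hB : Convex ℝ B)
    (P Q : Y → ℝ) (hP : ∀ y, 0 ≤ P y) (hQ : ∀ y, 0 < Q y)
    (hPsum : ∑ y, P y = 1) (hQsum : ∑ y, Q y = 1)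
    (ℓ : E → Y → ℝ) (β : ℝ) (hβ : 0 < β)
    (hconc : ∀ y, ConcaveOn ℝ B (fun b => Real.exp (-β * ℓ b y)))
    (b bstar : E) (hbB : b ∈ B) (hbstarB : bstar ∈ B)
    (hb : ∀ b' ∈ B, ∑ y, Q y * ℓ b y ≤ ∑ y, Q y * ℓ b' y)
    (hbstar : ∀ b' ∈ B, ∑ y, P y * ℓ bstar y ≤ ∑ y, P y * ℓ b' y) :
    ∑ y, P y * (ℓ b y - ℓ bstar y) ≤
      (1 / β) * ∑ y, P y * Real.log (P y / Q y) := by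
  set r : Y → ℝ := fun y => Real.exp (β * (ℓ b y - ℓ bstar y)) with hr
  have hrpos : ∀ y, 0 < r y := fun y => Real.exp_pos _
  set S : ℝ := ∑ y, Q y * r y with hS
  -- Key step: S ≤ 1
  have hkey : S ≤ 1 := by
    by_contra hc
    push_neg at hc
    set C : ℝ := ∑ y, Q y * (r y - 1)^2 with hC
    have hC0 : 0 ≤ C := Finset.sum_nonneg fun y _ => mul_nonneg (hQ y).le (sq_nonneg _)
    set t : ℝ := min (1/2) ((S - 1)/(4*C + 1)) with ht
    have hS1 : 0 < S - 1 := by linarith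
    have hden : (0:ℝ) < 4*C + 1 := by linarith
    have ht0 : 0 < t := lt_min (by norm_num) (div_pos hS1 hden)
    have ht1 : t ≤ 1/2 := min_le_left _ _
    have ht2 : t ≤ (S - 1)/(4*C + 1) := min_le_right _ _
    set bt : E := (1 - t) • b + t • bstar with hbt
    have hbtB : bt ∈ B := hB hbB hbstarB (by linarith) (le_of_lt ht0) (by ring)
    -- pointwise log inequality
    have hpt : ∀ y, -β * ℓ b y + Real.log (1 + t * (r y - 1)) ≤ -β * ℓ bt y := by
      intro y
      have hcv := (hconc y).2 hbB hbstarB (by linarith : (0:ℝ) ≤ 1 - t)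
        (le_of_lt ht0) (by ring)
      simp only at hcv
      have hexp : Real.exp (-β * ℓ bstar y) = Real.exp (-β * ℓ b y) * r y := by
        rw [hr, ← Real.exp_add]; ring_nf
      have hu2 : -(1/2 : ℝ) ≤ t * (r y - 1) := by
        have : -t ≤ t * (r y - 1) := by nlinarith [hrpos y]
        linarith
      have hupos : 0 < 1 + t * (r y - 1) := by linarith
      have hle : Real.exp (-β * ℓ b y) * (1 + t * (r y - 1)) ≤ Real.exp (-β * ℓ bt y) := by
        calc Real.exp (-β * ℓ b y) * (1 + t * (r y - 1))
            = (1 - t) * Real.exp (-β * ℓ b y) + t * Real.exp (-β * ℓ bstar y) := by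
              rw [hexp]; ring
          _ ≤ Real.exp (-β * ℓ bt y) := hcv
      have := Real.log_le_log (by positivity) hle
      rwa [Real.log_mul (Real.exp_ne_zero _) (ne_of_gt hupos), Real.log_exp,
        Real.log_exp] at this
    -- sum it with weights Q
    have hsum : ∑ y, Q y * Real.log (1 + t * (r y - 1)) ≤ 0 := by
      have h1 : ∑ y, Q y * (-β * ℓ b y + Real.log (1 + t * (r y - 1))) ≤
          ∑ y, Q y * (-β * ℓ bt y) :=
        Finset.sum_le_sum fun y _ =>
          mul_le_mul_of_nonneg_left (hpt y) (le_of_lt (hQ y))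
      have h2 : ∑ y, Q y * ℓ b y ≤ ∑ y, Q y * ℓ bt y := hb bt hbtB
      have e1 : ∑ y, Q y * (-β * ℓ b y + Real.log (1 + t * (r y - 1))) =
          -β * ∑ y, Q y * ℓ b y + ∑ y, Q y * Real.log (1 + t * (r y - 1)) := by
        rw [Finset.mul_sum, ← Finset.sum_add_distrib]
        exact Finset.sum_congr rfl fun y _ => by ring
      have e2 : ∑ y, Q y * (-β * ℓ bt y) = -β * ∑ y, Q y * ℓ bt y := by
        rw [Finset.mul_sum]; exact Finset.sum_congr rfl fun y _ => by ring
      rw [e1, e2] at h1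
      nlinarith
    -- lower bound the sum
    have hlb : t * (S - 1) - 2 * t^2 * C ≤ ∑ y, Q y * Real.log (1 + t * (r y - 1)) := by
      have e3 : t * (S - 1) - 2 * t^2 * C =
          ∑ y, Q y * (t * (r y - 1) - 2 * (t * (r y - 1))^2) := by
        rw [hS, hC]
        rw [Finset.sum_congr rfl (fun y _ => by ring :
          ∀ y ∈ Finset.univ, Q y * (t * (r y - 1) - 2 * (t * (r y - 1))^2) =
            t * (Q y * r y) - t * Q y - 2 * t^2 * (Q y * (r y - 1)^2))]
        rw [Finset.sum_sub_distrib, Finset.sum_sub_distrib, ← Finset.mul_sum,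
          ← Finset.mul_sum, ← Finset.mul_sum, hQsum]
        ring
      rw [e3]
      refine Finset.sum_le_sum fun y _ => ?_
      refine mul_le_mul_of_nonneg_left ?_ (le_of_lt (hQ y))
      refine log_one_add_ge _ ?_
      have : -t ≤ t * (r y - 1) := by nlinarith [hrpos y]
      linarith
    -- contradiction: t*(S-1) - 2t²C > 0
    have h4 : t * (4*C + 1) ≤ S - 1 := (le_div_iff₀ hden).mp ht2
    nlinarith [mul_nonneg ht0.le hC0, mul_pos ht0 hS1]
  -- Second part
  have key2 : ∀ y, β * (P y * (ℓ b y - ℓ bstar y)) ≤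
      P y * Real.log (P y / Q y) - (P y - Q y * r y) := by
    intro y
    rcases eq_or_lt_of_le (hP y) with h0 | h0
    · rw [← h0]; simp; exact mul_nonneg (hQ y).le (hrpos y).le
    · have hlog : Real.log (Q y * r y / P y) ≤ Q y * r y / P y - 1 :=
        Real.log_le_sub_one_of_pos (div_pos (mul_pos (hQ y) (hrpos y)) h0)
      have e4 : Real.log (Q y * r y / P y) =
          Real.log (Q y) + β * (ℓ b y - ℓ bstar y) - Real.log (P y) := by
        rw [Real.log_div (ne_of_gt (mul_pos (hQ y) (hrpos y))) (ne_of_gt h0),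
          Real.log_mul (ne_of_gt (hQ y)) (ne_of_gt (hrpos y)), hr, Real.log_exp]
      have e5 : Real.log (P y / Q y) = Real.log (P y) - Real.log (Q y) :=
        Real.log_div (ne_of_gt h0) (ne_of_gt (hQ y))
      rw [e4] at hlog
      have e6 : P y * (Q y * r y / P y) = Q y * r y := by
        field_simp
      nlinarith [mul_le_mul_of_nonneg_left hlog (le_of_lt h0)]
  have hsum2 : β * ∑ y, P y * (ℓ b y - ℓ bstar y) ≤
      ∑ y, P y * Real.log (P y / Q y) - (1 - S) := by
    have := Finset.sum_le_sum fun y (_ : y ∈ Finset.univ) => key2 y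
    rw [Finset.sum_sub_distrib, ← Finset.mul_sum, Finset.sum_sub_distrib, hPsum] at this
    rw [hS]
    linarith
  have h5 : β * ∑ y, P y * (ℓ b y - ℓ bstar y) ≤ ∑ y, P y * Real.log (P y / Q y) := by
    linarith
  calc ∑ y, P y * (ℓ b y - ℓ bstar y)
      = (1/β) * (β * ∑ y, P y * (ℓ b y - ℓ bstar y)) := by field_simp
    _ ≤ (1/β) * ∑ y, P y * Real.log (P y / Q y) :=
        mul_le_mul_of_nonneg_left h5 (by positivity)
end

section
/- For positive definite k×k matrices Δ_U, Δ_s and sequences n → ∞ with m = c·n^p, p ≥ 1, c > 0, one has (1/2)[log det(A + (n+1)Δ_U + mΔ_s) − log det((n+1)Δ_U + mΔ_s)] ≍ k/n^p for any fixed positive definite matrix A. -/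
/-!
Put `B = (n + 1) • ΔU + m • Δs`. Positive definite matrices dominate each other up to scalar
factors in the Loewner order, so `A ≤ (a / m) • B` and `B ≤ (w * n ^ p) • A` for constants `a, w`:
`A` is squeezed between `s • B` and `t • B` with `s, t ≍ n ^ (-p)`. The determinant is monotone on
positive definite matrices (conjugate by `B ^ (-1/2)`), hence
`k * log (1 + s) ≤ log det (A + B) - log det B ≤ k * log (1 + t)`, and `log (1 + x) ≍ x` near `0`.
-/

open scoped MatrixOrder ComplexOrder

namespace Matrix

variable {n 𝕜 : Type*} [Fintype n] [DecidableEq n] [RCLike 𝕜]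

theorem PosDef.exists_pos_smul_one_le {P : Matrix n n 𝕜} (hP : P.PosDef) :
    ∃ a : ℝ, 0 < a ∧ a • (1 : Matrix n n 𝕜) ≤ P := by
  cases isEmpty_or_nonempty n
  · exact ⟨1, one_pos, (Subsingleton.elim _ _ : P = _) ▸ le_rfl⟩
  simp_rw [← Algebra.algebraMap_eq_smul_one]
  exact (CFC.exists_pos_algebraMap_le_iff hP.isHermitian).2 fun _ hx =>
    hP.isStrictlyPositive.spectrum_pos hx

theorem IsHermitian.exists_le_pos_smul_one {Q : Matrix n n 𝕜} (hQ : Q.IsHermitian) :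
    ∃ b : ℝ, 0 < b ∧ Q ≤ b • (1 : Matrix n n 𝕜) := by
  obtain ⟨b, hb⟩ := (finite_real_spectrum (A := Q)).bddAbove
  refine ⟨max b 1, by positivity, ?_⟩
  rw [← Algebra.algebraMap_eq_smul_one, le_algebraMap_iff_spectrum_le hQ]
  exact fun x hx => (hb hx).trans (le_max_left _ _)

theorem PosDef.exists_le_pos_smul {P Q : Matrix n n 𝕜} (hP : P.PosDef) (hQ : Q.IsHermitian) :
    ∃ t : ℝ, 0 < t ∧ Q ≤ t • P := by
  obtain ⟨a, ha, haP⟩ := hP.exists_pos_smul_one_le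
  obtain ⟨b, hb, hQb⟩ := hQ.exists_le_pos_smul_one
  refine ⟨b / a, by positivity, hQb.trans ?_⟩
  calc b • (1 : Matrix n n 𝕜) = (b / a) • a • (1 : Matrix n n 𝕜) := by
        rw [smul_smul, div_mul_cancel₀ b ha.ne']
    _ ≤ (b / a) • P := smul_le_smul_of_nonneg_left haP (by positivity)

theorem one_le_det_of_one_le {M : Matrix n n ℝ} (hM : 1 ≤ M) : 1 ≤ M.det := by
  have hH : M.IsHermitian := by
    simpa using (PosSemidef.one.add (le_iff.1 hM)).isHermitian
  have h1 : ∀ i, 1 ≤ hH.eigenvalues i := fun i =>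
    (CFC.one_le_iff M hH).1 hM _ (hH.eigenvalues_mem_spectrum_real i)
  rw [hH.det_eq_prod_eigenvalues]
  exact Finset.one_le_prod fun i _ => by simpa using h1 i

theorem PosDef.det_le_det {P Q : Matrix n n ℝ} (hP : P.PosDef) (hPQ : P ≤ Q) :
    P.det ≤ Q.det := by
  set R := CFC.sqrt P
  have hRR : R * R = P := CFC.sqrt_mul_sqrt_self P hP.posSemidef.nonneg
  have hR : R.PosDef := IsStrictlyPositive.posDef (hP.isStrictlyPositive.sqrt P)
  have hRdet : IsUnit R.det := (isUnit_iff_isUnit_det R).1 hR.isUnit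
  have hconj : 1 ≤ R⁻¹ * Q * R⁻¹ := by
    calc (1 : Matrix n n ℝ) = R⁻¹ * P * R⁻¹ := by
          rw [← hRR, ← mul_assoc, nonsing_inv_mul _ hRdet, one_mul, mul_nonsing_inv _ hRdet]
      _ ≤ R⁻¹ * Q * R⁻¹ := IsSelfAdjoint.conjugate_le_conjugate hPQ hR.isHermitian.inv
  have hQ : Q = R * (R⁻¹ * Q * R⁻¹) * R := by
    simp only [← mul_assoc, mul_nonsing_inv _ hRdet, one_mul,
      nonsing_inv_mul_cancel_right _ _ hRdet]
  calc P.det = P.det * 1 := (mul_one _).symm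
    _ ≤ P.det * (R⁻¹ * Q * R⁻¹).det :=
        mul_le_mul_of_nonneg_left (one_le_det_of_one_le hconj) hP.det_pos.le
    _ = Q.det := by
        conv_rhs => rw [hQ, det_mul, det_mul]
        rw [← hRR, det_mul]
        ring

theorem PosDef.log_det_smul {B : Matrix n n ℝ} (hB : B.PosDef) {r : ℝ} (hr : 0 < r) :
    Real.log (r • B).det = Fintype.card n * Real.log r + Real.log B.det := by
  rw [det_smul, Real.log_mul (by positivity) hB.det_pos.ne', Real.log_pow]

theorem PosDef.log_det_add_sub_log_det_le {A B : Matrix n n ℝ} (hB : B.PosDef) (hA : A.PosSemidef)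
    {t : ℝ} (ht : 0 ≤ t) (hAt : A ≤ t • B) :
    Real.log (A + B).det - Real.log B.det ≤ Fintype.card n * Real.log (1 + t) := by
  have hAB : (A + B).PosDef := hB.posSemidef_add hA
  have hle : A + B ≤ (1 + t) • B := (add_le_add_left hAt B).trans_eq (by module)
  have := Real.log_le_log hAB.det_pos (hAB.det_le_det hle)
  rw [hB.log_det_smul (by positivity)] at this
  linarith

theorem PosDef.card_mul_log_one_add_le_log_det_add_sub_log_det {A B : Matrix n n ℝ}
    (hB : B.PosDef) {s : ℝ} (hs : 0 ≤ s) (hsA : s • B ≤ A) :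
    Fintype.card n * Real.log (1 + s) ≤ Real.log (A + B).det - Real.log B.det := by
  have hsB : ((1 + s) • B).PosDef := hB.smul (by positivity)
  have hle : (1 + s) • B ≤ A + B := (add_le_add_left hsA B).trans_eq' (by module)
  have := Real.log_le_log hsB.det_pos (hsB.det_le_det hle)
  rw [hB.log_det_smul (by positivity)] at this
  linarith

end Matrix

section OrderedModule

variable {M : Type*} [AddCommGroup M] [PartialOrder M] [IsOrderedAddMonoid M] [Module ℝ M]
  [PosSMulMono ℝ M]

theorem le_div_smul_smul_add_smul {A U S : M} {a α β : ℝ} (hAS : A ≤ a • S) (hU : 0 ≤ U)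
    (ha : 0 ≤ a) (hα : 0 ≤ α) (hβ : 0 < β) : A ≤ (a / β) • (α • U + β • S) := calc
  A ≤ a • S := hAS
  _ ≤ (a / β * α) • U + a • S := le_add_of_nonneg_left (smul_nonneg (by positivity) hU)
  _ = (a / β) • (α • U + β • S) := by
      rw [smul_add, smul_smul, smul_smul, div_mul_cancel₀ a hβ.ne']

theorem smul_add_smul_le_smul {A U S : M} {u v α β : ℝ} (hU : U ≤ u • A) (hS : S ≤ v • A)
    (hα : 0 ≤ α) (hβ : 0 ≤ β) : α • U + β • S ≤ (α * u + β * v) • A := calc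
  α • U + β • S ≤ α • u • A + β • v • A :=
      add_le_add (smul_le_smul_of_nonneg_left hU hα) (smul_le_smul_of_nonneg_left hS hβ)
  _ = (α * u + β * v) • A := by rw [add_smul, smul_smul, smul_smul]

end OrderedModule

theorem inv_add_one_mul_le_log_one_add_inv {w y : ℝ} (hw : 0 < w) (hy : 1 ≤ y) :
    ((w + 1) * y)⁻¹ ≤ Real.log (1 + (w * y)⁻¹) := by
  have hwy : 0 < w * y := by positivity
  calc ((w + 1) * y)⁻¹ ≤ (w * y + 1)⁻¹ := inv_anti₀ (by positivity) (by nlinarith)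
    _ = 1 - (1 + (w * y)⁻¹)⁻¹ := by field_simp; ring
    _ ≤ Real.log (1 + (w * y)⁻¹) := Real.one_sub_inv_le_log_of_pos (by positivity)

theorem logdet_difference_rate_general (k : ℕ)
    (A ΔU Δs : Matrix (Fin k) (Fin k) ℝ)
    (hA : A.PosDef) (hΔU : ΔU.PosDef) (hΔs : Δs.PosDef)
    (c p : ℝ) (hc : 0 < c) (hp : 1 ≤ p) :
    ∃ c₁ c₂ : ℝ, ∃ N : ℕ, 0 < c₁ ∧ c₁ ≤ c₂ ∧
      ∀ n : ℕ, n ≥ N →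
        c₁ * ((k : ℝ) / (n : ℝ) ^ p) ≤
          (1 / 2) * (Real.log (A + ((n : ℝ) + 1) • ΔU + (c * (n : ℝ) ^ p) • Δs).det -
            Real.log (((n : ℝ) + 1) • ΔU + (c * (n : ℝ) ^ p) • Δs).det) ∧
        (1 / 2) * (Real.log (A + ((n : ℝ) + 1) • ΔU + (c * (n : ℝ) ^ p) • Δs).det -
            Real.log (((n : ℝ) + 1) • ΔU + (c * (n : ℝ) ^ p) • Δs).det) ≤
          c₂ * ((k : ℝ) / (n : ℝ) ^ p) := by
  obtain ⟨a, ha, hAs⟩ := hΔs.exists_le_pos_smul hA.isHermitian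
  obtain ⟨u, hu, hUA⟩ := hA.exists_le_pos_smul hΔU.isHermitian
  obtain ⟨v, hv, hsA⟩ := hA.exists_le_pos_smul hΔs.isHermitian
  set w := 2 * u + c * v
  have hw : 0 < w := by positivity
  refine ⟨(2 * (w + 1))⁻¹, max (2 * (w + 1))⁻¹ (a / (2 * c)), 1, by positivity,
    le_max_left _ _, fun n hn => ?_⟩
  set x : ℝ := (n : ℝ)
  have hx : 1 ≤ x := Nat.one_le_cast.2 hn
  have hxp : x ≤ x ^ p := by simpa using Real.rpow_le_rpow_of_exponent_le hx hp
  set B := (x + 1) • ΔU + (c * x ^ p) • Δs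
  have hB : B.PosDef := (hΔU.smul (by positivity)).add (hΔs.smul (by positivity))
  have upper : A ≤ (a / (c * x ^ p)) • B :=
    le_div_smul_smul_add_smul hAs hΔU.posSemidef.nonneg ha.le (by positivity) (by positivity)
  have lower : (w * x ^ p)⁻¹ • B ≤ A := by
    rw [inv_smul_le_iff_of_pos (by positivity)]
    refine (smul_add_smul_le_smul hUA hsA (by positivity) (by positivity)).trans
      (smul_le_smul_of_nonneg_right ?_ hA.posSemidef.nonneg)
    nlinarith
  have hup := hB.log_det_add_sub_log_det_le hA.posSemidef (by positivity) upper
  have hlow := hB.card_mul_log_one_add_le_log_det_add_sub_log_det (by positivity) lower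
  have hlog_low := inv_add_one_mul_le_log_one_add_inv hw (hx.trans hxp)
  simp only [Fintype.card_fin] at hup hlow
  rw [add_assoc A]
  constructor
  · calc (2 * (w + 1))⁻¹ * (k / x ^ p) = 1 / 2 * (k * ((w + 1) * x ^ p)⁻¹) := by field_simp
      _ ≤ 1 / 2 * (k * Real.log (1 + (w * x ^ p)⁻¹)) := by gcongr
      _ ≤ _ := by gcongr
  · calc _ ≤ 1 / 2 * (k * Real.log (1 + a / (c * x ^ p))) := by gcongr
      _ ≤ 1 / 2 * (k * (a / (c * x ^ p))) := by
          gcongr; linarith [Real.log_le_sub_one_of_pos (x := 1 + a / (c * x ^ p)) (by positivity)]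
      _ = a / (2 * c) * (k / x ^ p) := by field_simp
      _ ≤ _ := by gcongr; exact le_max_right _ _

theorem logdet_difference_rate (k : ℕ) [NeZero k]
    (A ΔU Δs : Matrix (Fin k) (Fin k) ℝ)
    (hA : A.PosDef) (hΔU : ΔU.PosDef) (hΔs : Δs.PosDef)
    (c p : ℝ) (hc : 0 < c) (hp : 1 ≤ p) :
    ∃ c₁ c₂ : ℝ, ∃ N : ℕ, 0 < c₁ ∧ c₁ ≤ c₂ ∧
      ∀ n : ℕ, n ≥ N →
        c₁ * ((k : ℝ) / (n : ℝ) ^ p) ≤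
          (1 / 2) * (Real.log (A + ((n : ℝ) + 1) • ΔU + (c * (n : ℝ) ^ p) • Δs).det -
            Real.log (((n : ℝ) + 1) • ΔU + (c * (n : ℝ) ^ p) • Δs).det) ∧
        (1 / 2) * (Real.log (A + ((n : ℝ) + 1) • ΔU + (c * (n : ℝ) ^ p) • Δs).det -
            Real.log (((n : ℝ) + 1) • ΔU + (c * (n : ℝ) ^ p) • Δs).det) ≤
          c₂ * ((k : ℝ) / (n : ℝ) ^ p) :=
  logdet_difference_rate_general k A ΔU Δs hA hΔU hΔs c p hc hp
end
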